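/- Let f_M and f be convex functions ℝ → ℝ with f_M → f pointwise on ℝ as M → ∞, where f is differentiable. If u_M → u in ℝ and v_M ∈ ∂f_M(u_M) with v_M convergent, then lim v_M = f'(u). (Pointwise convergence of convex functions implies graph convergence of subdifferentials.) -/
import Mathlib


/-- The subdifferential of `f : ℝ → ℝ` at `u`. -/
def subdiff15 (f : ℝ → ℝ) (u : ℝ) : Set ℝ :=
  {c : ℝ | ∀ η : ℝ, f η - f u ≥ c * (η - u)}

/-- One-dimensional Attouch theorem: if convex functions `f_M` converge pointwise to
a differentiable convex `f`, `u_M → u`, and `v_M ∈ ∂f_M(u_M)` converges, then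
`lim v_M = f'(u)`. -/
theorem attouch_one_dim (f : ℕ → ℝ → ℝ) (g : ℝ → ℝ)
    (hfconv : ∀ M, ConvexOn ℝ Set.univ (f M))
    (hgconv : ConvexOn ℝ Set.univ g)
    (hgdiff : Differentiable ℝ g)
    (hptw : ∀ x : ℝ, Filter.Tendsto (fun M => f M x) Filter.atTop (nhds (g x)))
    (u : ℕ → ℝ) (x : ℝ) (hu : Filter.Tendsto u Filter.atTop (nhds x))
    (v : ℕ → ℝ) (hv : ∀ M, v M ∈ subdiff15 (f M) (u M))
    (l : ℝ) (hvl : Filter.Tendsto v Filter.atTop (nhds l)) :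
    l = deriv g x := by
  have hcont : Continuous g := hgdiff.continuous
  -- Step 1: f M (u M) → g x
  have key : Filter.Tendsto (fun M => f M (u M)) Filter.atTop (nhds (g x)) := by
    rw [tendsto_order]
    constructor
    · -- lower bound side
      intro a ha
      set p := x - 1 with hp
      have hpx : p < x := by simp [hp]
      -- the auxiliary function φ r = g r + (x - r) * slope(p, r)
      have hφcont : Filter.Tendsto
          (fun r => g r + (x - r) * ((g r - g p) / (r - p)))
          (nhds x) (nhds (g x)) := by
        have h1 : Filter.Tendsto
            (fun r => g r + (x - r) * ((g r - g p) / (r - p)))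
            (nhds x) (nhds (g x + (x - x) * ((g x - g p) / (x - p)))) := by
          apply Filter.Tendsto.add (hcont.tendsto x)
          apply Filter.Tendsto.mul
          · exact (continuous_const.sub continuous_id).tendsto' x _ rfl
          · apply Filter.Tendsto.div
            · exact ((hcont.sub continuous_const).tendsto' x _ rfl)
            · exact ((continuous_id.sub continuous_const).tendsto' x _ rfl)
            · intro h; linarith [hpx, sub_eq_zero.mp h]
        simpa using h1
      -- pick r ∈ (p, x) with φ r > a
      have hev : ∀ᶠ r in nhdsWithin x (Set.Iio x),
          g r + (x - r) * ((g r - g p) / (r - p)) > a ∧ r ∈ Set.Ioo p x := by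
        have h2 : ∀ᶠ r in nhds x, g r + (x - r) * ((g r - g p) / (r - p)) > a :=
          hφcont.eventually (eventually_gt_nhds ha)
        have h3 : ∀ᶠ r in nhds x, r ∈ Set.Ioi p := eventually_gt_nhds hpx
        filter_upwards [nhdsWithin_le_nhds h2, nhdsWithin_le_nhds h3,
          self_mem_nhdsWithin] with r hr1 hr2 hr3
        exact ⟨hr1, hr2, hr3⟩
      obtain ⟨r, hra, hr⟩ := hev.exists
      -- eventually u M > r
      have hur : ∀ᶠ M in Filter.atTop, r < u M :=
        hu.eventually (eventually_gt_nhds hr.2)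
      -- eventually f M r + (u M - r) * slope(p,r) > a
      have hψ : Filter.Tendsto
          (fun M => f M r + (u M - r) * ((f M r - f M p) / (r - p)))
          Filter.atTop (nhds (g r + (x - r) * ((g r - g p) / (r - p)))) := by
        apply Filter.Tendsto.add (hptw r)
        apply Filter.Tendsto.mul (hu.sub tendsto_const_nhds)
        apply Filter.Tendsto.div ((hptw r).sub (hptw p)) tendsto_const_nhds
        intro h; linarith [hr.1, sub_eq_zero.mp h]
      have hψa : ∀ᶠ M in Filter.atTop,
          f M r + (u M - r) * ((f M r - f M p) / (r - p)) > a :=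
        hψ.eventually (eventually_gt_nhds hra)
      filter_upwards [hur, hψa] with M h1 h2
      -- convexity slope inequality
      have hs := (hfconv M).slope_mono_adjacent (Set.mem_univ p) (Set.mem_univ (u M))
        hr.1 h1
      have hur' : (0:ℝ) < u M - r := by linarith
      have : (u M - r) * ((f M r - f M p) / (r - p)) ≤ f M (u M) - f M r := by
        rw [mul_comm]
        calc (f M r - f M p) / (r - p) * (u M - r)
            ≤ (f M (u M) - f M r) / (u M - r) * (u M - r) := by
              apply mul_le_mul_of_nonneg_right hs (le_of_lt hur')
          _ = f M (u M) - f M r := div_mul_cancel₀ _ (ne_of_gt hur')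
      linarith
    · -- upper bound side
      intro a ha
      have hub : ∀ M, f M (u M) ≤ f M x - v M * (x - u M) := by
        intro M
        have := hv M x
        linarith
      have hT : Filter.Tendsto (fun M => f M x - v M * (x - u M))
          Filter.atTop (nhds (g x)) := by
        have h1 : Filter.Tendsto (fun M => f M x - v M * (x - u M))
            Filter.atTop (nhds (g x - l * (x - x))) :=
          (hptw x).sub (hvl.mul (tendsto_const_nhds.sub hu))
        simpa using h1
      filter_upwards [hT.eventually (eventually_lt_nhds ha)] with M hM
      exact lt_of_le_of_lt (hub M) hM
  -- Step 2: l ∈ ∂g(x)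
  have lsub : ∀ η : ℝ, g η - g x ≥ l * (η - x) := by
    intro η
    have h1 : Filter.Tendsto (fun M => v M * (η - u M)) Filter.atTop
        (nhds (l * (η - x))) := hvl.mul (tendsto_const_nhds.sub hu)
    have h2 : Filter.Tendsto (fun M => f M η - f M (u M)) Filter.atTop
        (nhds (g η - g x)) := (hptw η).sub key
    exact le_of_tendsto_of_tendsto' h1 h2 (fun M => hv M η)
  -- Step 3: uniqueness of subgradient at a differentiability point
  have hd := (hgdiff x).hasDerivAt
  rw [hasDerivAt_iff_tendsto_slope] at hd
  have hge : l ≤ deriv g x := by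
    have hmono : nhdsWithin x (Set.Ioi x) ≤ nhdsWithin x {x}ᶜ :=
      nhdsWithin_mono x (fun y hy => ne_of_gt hy)
    refine ge_of_tendsto (hd.mono_left hmono) ?_
    filter_upwards [self_mem_nhdsWithin] with y hy
    have hyx : (0:ℝ) < y - x := sub_pos.mpr hy
    rw [slope_def_field]
    rw [le_div_iff₀ hyx]
    linarith [lsub y]
  have hle : deriv g x ≤ l := by
    have hmono : nhdsWithin x (Set.Iio x) ≤ nhdsWithin x {x}ᶜ :=
      nhdsWithin_mono x (fun y hy => ne_of_lt hy)
    refine le_of_tendsto (hd.mono_left hmono) ?_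
    filter_upwards [self_mem_nhdsWithin] with y hy
    have hyx : y - x < 0 := sub_neg.mpr hy
    rw [slope_def_field, div_le_iff_of_neg hyx]
    linarith [lsub y]
  linarith
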